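/- arXiv:2103.02681 — 2 statements merged into one kernel-verified Lean document; each statement's English description precedes it below -/
import Mathlib

section
/- Let ε > 0, λ > 0, and z ∈ ℝ. If √λ ≤ ε, then the function q_{λ,z}(x) = (1/(2λ))(x − z)² + log(1 + |x|/ε) is convex on [0, ∞). If √λ > ε, then q_{λ,z} is concave on [0, √λ − ε] and convex on [√λ − ε, ∞). -/
open Real Filter

/-- The scalar log-sum penalty `g(w) = log(1 + |w|/ε)`. -/
noncomputable def logpen (ε : ℝ) (w : ℝ) : ℝ := Real.log (1 + |w| / ε)

/-- The objective `q_{λ,z}(x) = (1/(2λ))(x − z)² + g(x)`. -/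
noncomputable def qfun (lam ε z x : ℝ) : ℝ :=
  1 / (2 * lam) * (x - z) ^ 2 + logpen ε x

/-- The proximity operator of `λ g` at `z`: the set of global minimizers of `q_{λ,z}`. -/
def prox (lam ε z : ℝ) : Set ℝ := {x | ∀ y : ℝ, qfun lam ε z x ≤ qfun lam ε z y}

/-- `r₁(z) = (z − ε)/2 − √((z + ε)²/4 − λ)`. -/
noncomputable def r1 (lam ε z : ℝ) : ℝ :=
  (z - ε) / 2 - Real.sqrt ((z + ε) ^ 2 / 4 - lam)

/-- `r₂(z) = (z − ε)/2 + √((z + ε)²/4 − λ)`. -/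
noncomputable def r2 (lam ε z : ℝ) : ℝ :=
  (z - ε) / 2 + Real.sqrt ((z + ε) ^ 2 / 4 - lam)

/-- `r(z) = q_{λ,z}(r₂(z)) − q_{λ,z}(0)`. -/
noncomputable def rfun (lam ε z : ℝ) : ℝ :=
  qfun lam ε z (r2 lam ε z) - qfun lam ε z 0

/-- The iteratively reweighted ℓ₁ iteration for `prox_{λ g}(z)`. -/
def IterRW (lam ε z : ℝ) (x : ℕ → ℝ) : Prop :=
  ∀ k : ℕ, x (k + 1) =
    if |z| ≤ lam / (ε + |x k|) then 0
    else Real.sign z * (|z| - lam / (ε + |x k|))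

/-! On `[0, ∞)` we have `q_{λ,z}(x) = (x - z)² / (2λ) + log (ε + x) - log ε`, whose second
derivative `1/λ - 1/(ε + x)²` is nonpositive for `ε + x ≤ √λ` and nonnegative for `ε + x ≥ √λ`. -/

section
variable {lam ε z x : ℝ}

lemma continuous_logpen (hε : 0 < ε) : Continuous (logpen ε) :=
  (continuous_const.add (continuous_abs.div_const ε)).log fun w =>
    (add_pos_of_pos_of_nonneg one_pos (div_nonneg (abs_nonneg w) hε.le)).ne'

lemma continuous_qfun (hε : 0 < ε) : Continuous (qfun lam ε z) :=
  (continuous_const.mul ((continuous_id.sub continuous_const).pow 2)).add (continuous_logpen hε)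

lemma hasDerivAt_logpen (hε : 0 < ε) (hx : 0 < x) : HasDerivAt (logpen ε) (ε + x)⁻¹ x := by
  have hlog : HasDerivAt (fun w => Real.log (1 + w / ε)) ((1 / ε) / (1 + x / ε)) x :=
    (((hasDerivAt_id' x).div_const ε).const_add 1).log (by positivity)
  have hEq : (fun w => Real.log (1 + w / ε)) =ᶠ[nhds x] logpen ε := by
    filter_upwards [lt_mem_nhds hx] with w hw
    rw [logpen, abs_of_pos hw]
  refine (hlog.congr_of_eventuallyEq hEq.symm).congr_deriv ?_
  field_simp

lemma hasDerivAt_qfun (hε : 0 < ε) (hx : 0 < x) :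
    HasDerivAt (qfun lam ε z) ((x - z) / lam + (ε + x)⁻¹) x := by
  have hquad : HasDerivAt (fun y => 1 / (2 * lam) * (y - z) ^ 2) ((x - z) / lam) x := by
    refine ((((hasDerivAt_id' x).sub_const z).pow 2).const_mul (1 / (2 * lam))).congr_deriv ?_
    ring
  exact hquad.add (hasDerivAt_logpen hε hx)

lemma hasDerivAt_deriv_qfun (hx : ε + x ≠ 0) :
    HasDerivAt (fun y => (y - z) / lam + (ε + y)⁻¹) (lam⁻¹ - ((ε + x) ^ 2)⁻¹) x := by
  refine (((hasDerivAt_id' x).sub_const z |>.div_const lam).add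
    (((hasDerivAt_id' x).const_add ε).inv hx)).congr_deriv ?_
  ring

lemma convexOn_qfun (hε : 0 < ε) (hlam : 0 < lam) {s : Set ℝ} (hs : Convex ℝ s)
    (hs₀ : s ⊆ Set.Ici 0) (hsqrt : ∀ x ∈ interior s, √lam ≤ ε + x) :
    ConvexOn ℝ s (qfun lam ε z) := by
  have hpos : ∀ x ∈ interior s, 0 < x := fun x hx => by
    simpa using interior_mono hs₀ hx
  refine convexOn_of_hasDerivWithinAt2_nonneg hs (continuous_qfun hε).continuousOn
    (fun x hx => (hasDerivAt_qfun hε (hpos x hx)).hasDerivWithinAt)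
    (fun x hx => (hasDerivAt_deriv_qfun (by linarith [hpos x hx])).hasDerivWithinAt)
    fun x hx => ?_
  have hsq : lam ≤ (ε + x) ^ 2 := (Real.sqrt_le_left (by linarith [hpos x hx])).1 (hsqrt x hx)
  exact sub_nonneg.2 (inv_anti₀ hlam hsq)

lemma concaveOn_qfun (hε : 0 < ε) {s : Set ℝ} (hs : Convex ℝ s)
    (hs₀ : s ⊆ Set.Ici 0) (hsqrt : ∀ x ∈ interior s, ε + x ≤ √lam) :
    ConcaveOn ℝ s (qfun lam ε z) := by
  have hpos : ∀ x ∈ interior s, 0 < x := fun x hx => by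
    simpa using interior_mono hs₀ hx
  refine concaveOn_of_hasDerivWithinAt2_nonpos hs (continuous_qfun hε).continuousOn
    (fun x hx => (hasDerivAt_qfun hε (hpos x hx)).hasDerivWithinAt)
    (fun x hx => (hasDerivAt_deriv_qfun (by linarith [hpos x hx])).hasDerivWithinAt)
    fun x hx => ?_
  have hεx : 0 < ε + x := by linarith [hpos x hx]
  have hsq : (ε + x) ^ 2 ≤ lam := (Real.le_sqrt' hεx).1 (hsqrt x hx)
  exact sub_nonpos.2 (inv_anti₀ (by positivity) hsq)

end

/-- convexity/concavity of `q_{λ,z}` on `[0, ∞)`. -/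
theorem qfun_convexity (ε lam z : ℝ) (hε : 0 < ε) (hlam : 0 < lam) :
    (Real.sqrt lam ≤ ε → ConvexOn ℝ (Set.Ici (0 : ℝ)) (qfun lam ε z)) ∧
    (ε < Real.sqrt lam →
      ConcaveOn ℝ (Set.Icc (0 : ℝ) (Real.sqrt lam - ε)) (qfun lam ε z) ∧
      ConvexOn ℝ (Set.Ici (Real.sqrt lam - ε)) (qfun lam ε z)) := by
  refine ⟨fun hle => convexOn_qfun hε hlam (convex_Ici 0) le_rfl fun x hx => ?_,
    fun hlt => ⟨concaveOn_qfun hε (convex_Icc _ _) (fun x hx => hx.1) fun x hx => ?_,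
      convexOn_qfun hε hlam (convex_Ici _) (Set.Ici_subset_Ici.2 (sub_nonneg.2 hlt.le))
        fun x hx => ?_⟩⟩
  · rw [interior_Ici, Set.mem_Ioi] at hx
    linarith
  · rw [interior_Icc] at hx
    linarith [hx.2]
  · rw [interior_Ici, Set.mem_Ioi] at hx
    linarith
end

section
/- Let ε > 0, λ > 0, z ≥ λ/ε, and let the sequence (x^{(k)})_{k≥0} be generated by the reweighted ℓ₁ iteration from an initial guess x^{(0)} > 0. Then x^{(k)} > 0 for all k ≥ 0, and the sequence (x^{(k)}) converges to r₂(z) = (z − ε)/2 + √((z + ε)²/4 − λ). -/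
open Real Filter

/-!
On positive iterates the iteration is `x ↦ T x = z − λ/(ε + x)`, whose fixed points are the roots
`r₁ ≤ 0 ≤ r₂` of `(z − x)(ε + x) = λ`. Since `T` is increasing and `T x − x` has the sign of
`r₂ − x` for `x ≥ r₁`, each iterate lies between its predecessor and `r₂`. The sequence is
therefore monotone and bounded, and its limit is a fixed point of `T` in the closed interval
between `x⁽⁰⁾ > 0` and `r₂`, which can only be `r₂`. (A contraction argument cannot work
uniformly: for `z = ε = √λ` the convergence is sublinear.)
-/

open Set Topology OrderDual
open scoped Interval

section SuccMemUIcc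

variable {α : Type*} [ConditionallyCompleteLinearOrder α] [TopologicalSpace α] [OrderTopology α]
  {x : ℕ → α} {a : α}

theorem exists_tendsto_mem_Icc_of_succ_mem_uIcc (h : ∀ k, x (k + 1) ∈ [[x k, a]])
    (h0 : x 0 ≤ a) : ∃ L ∈ Icc (x 0) a, Tendsto x atTop (𝓝 L) := by
  have hle : ∀ k, x k ≤ a := by
    intro k
    induction k with
    | zero => exact h0
    | succ k ih => exact (uIcc_of_le ih ▸ h k).2
  have hmono : Monotone x := monotone_nat_of_le_succ fun k => (uIcc_of_le (hle k) ▸ h k).1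
  have hbdd : BddAbove (range x) := ⟨a, forall_mem_range.2 hle⟩
  exact ⟨⨆ k, x k, ⟨le_ciSup hbdd 0, ciSup_le hle⟩, tendsto_atTop_ciSup hmono hbdd⟩

theorem exists_tendsto_mem_uIcc_of_succ_mem_uIcc (h : ∀ k, x (k + 1) ∈ [[x k, a]]) :
    ∃ L ∈ [[x 0, a]], Tendsto x atTop (𝓝 L) := by
  rcases le_total (x 0) a with h0 | h0
  · obtain ⟨L, hL, hx⟩ := exists_tendsto_mem_Icc_of_succ_mem_uIcc h h0
    exact ⟨L, Icc_subset_uIcc hL, hx⟩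
  · obtain ⟨L, hL, hx⟩ := exists_tendsto_mem_Icc_of_succ_mem_uIcc (x := toDual ∘ x)
      (a := toDual a) (fun k => by simpa [uIcc_toDual] using h k) h0
    exact ⟨ofDual L, Icc_subset_uIcc' ⟨hL.2, hL.1⟩, hx⟩

end SuccMemUIcc

theorem isFixedPt_of_tendsto_of_succ_eq {β : Type*} [TopologicalSpace β] [T2Space β]
    {f : β → β} {x : ℕ → β} {L : β} (hstep : ∀ k, x (k + 1) = f (x k))
    (hx : Tendsto x atTop (𝓝 L)) (hf : ContinuousAt f L) : Function.IsFixedPt f L := by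
  refine tendsto_nhds_unique ?_ (hx.comp (tendsto_add_atTop_nat 1))
  simpa [Function.comp_def, hstep] using hf.tendsto.comp hx

noncomputable def reweightedStep (lam ε z t : ℝ) : ℝ := z - lam / (ε + t)

section ReweightedStep

variable {lam ε z : ℝ}

theorem continuousAt_reweightedStep {t : ℝ} (ht : ε + t ≠ 0) :
    ContinuousAt (reweightedStep lam ε z) t :=
  continuousAt_const.sub (continuousAt_const.div (continuousAt_const.add continuousAt_id) ht)

theorem reweightedStep_le_reweightedStep (hlam : 0 ≤ lam) {s t : ℝ} (hs : 0 < ε + s)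
    (hst : s ≤ t) : reweightedStep lam ε z s ≤ reweightedStep lam ε z t := by
  unfold reweightedStep
  gcongr

theorem r1_le_r2 : r1 lam ε z ≤ r2 lam ε z := by
  unfold r1 r2
  linarith [Real.sqrt_nonneg ((z + ε) ^ 2 / 4 - lam)]

theorem reweightedStep_sub_self (hD : lam ≤ (z + ε) ^ 2 / 4) {t : ℝ} (ht : ε + t ≠ 0) :
    reweightedStep lam ε z t - t = (r2 lam ε z - t) * (t - r1 lam ε z) / (ε + t) := by
  have hs := Real.sq_sqrt (sub_nonneg.2 hD)
  rw [eq_div_iff ht, reweightedStep, r1, r2, sub_mul, sub_mul, div_mul_cancel₀ _ ht]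
  linear_combination -hs

theorem reweightedStep_r2 (hD : lam ≤ (z + ε) ^ 2 / 4) (h : ε + r2 lam ε z ≠ 0) :
    reweightedStep lam ε z (r2 lam ε z) = r2 lam ε z := by
  simpa [sub_eq_zero] using reweightedStep_sub_self hD h

theorem reweightedStep_mem_uIcc (hlam : 0 ≤ lam) (hD : lam ≤ (z + ε) ^ 2 / 4) {t : ℝ}
    (ht : 0 < ε + t) (hr1 : r1 lam ε z ≤ t) (hr2 : 0 < ε + r2 lam ε z) :
    reweightedStep lam ε z t ∈ [[t, r2 lam ε z]] := by
  have hsub := reweightedStep_sub_self hD ht.ne'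
  have hfix := reweightedStep_r2 hD hr2.ne'
  rcases le_total t (r2 lam ε z) with h | h
  · rw [uIcc_of_le h]
    refine ⟨sub_nonneg.1 ?_, (reweightedStep_le_reweightedStep hlam ht h).trans_eq hfix⟩
    rw [hsub]
    exact div_nonneg (mul_nonneg (sub_nonneg.2 h) (sub_nonneg.2 hr1)) ht.le
  · rw [uIcc_of_ge h]
    refine ⟨hfix.symm.trans_le (reweightedStep_le_reweightedStep hlam hr2 h), sub_nonpos.1 ?_⟩
    rw [hsub]
    exact div_nonpos_of_nonpos_of_nonneg
      (mul_nonpos_of_nonpos_of_nonneg (sub_nonpos.2 h) (sub_nonneg.2 hr1)) ht.le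

theorem eq_r2_of_reweightedStep_eq (hD : lam ≤ (z + ε) ^ 2 / 4) {t : ℝ} (ht : ε + t ≠ 0)
    (hfix : reweightedStep lam ε z t = t) (hr : r1 lam ε z < t ∨ r2 lam ε z ≤ t) :
    t = r2 lam ε z := by
  have h := reweightedStep_sub_self hD ht
  rw [hfix, sub_self, eq_comm, div_eq_zero_iff, mul_eq_zero, sub_eq_zero, sub_eq_zero] at h
  rcases h with (h | h) | h
  · exact h.symm
  · rcases hr with hr | hr
    · exact absurd h hr.ne'
    · exact le_antisymm (h ▸ r1_le_r2) hr
  · exact absurd h ht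

theorem abs_sub_div_two_le_sqrt (hzε : lam ≤ z * ε) :
    |z - ε| / 2 ≤ Real.sqrt ((z + ε) ^ 2 / 4 - lam) := by
  rw [Real.le_sqrt (by positivity) (by nlinarith [sq_nonneg (z - ε)]), div_pow, sq_abs]
  linarith

theorem r1_nonpos (hzε : lam ≤ z * ε) : r1 lam ε z ≤ 0 := by
  unfold r1
  linarith [abs_sub_div_two_le_sqrt hzε, le_abs_self (z - ε)]

theorem r2_nonneg (hzε : lam ≤ z * ε) : 0 ≤ r2 lam ε z := by
  unfold r2
  linarith [abs_sub_div_two_le_sqrt hzε, neg_abs_le (z - ε)]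

theorem div_add_lt_of_div_le (hε : 0 < ε) (hlam : 0 < lam) (hz : lam / ε ≤ z) {t : ℝ} (ht : 0 < t) :
    lam / (ε + t) < z :=
  (div_lt_div_of_pos_left hlam hε (lt_add_of_pos_right ε ht)).trans_le hz

theorem reweightedStep_pos (hε : 0 < ε) (hlam : 0 < lam) (hz : lam / ε ≤ z) {t : ℝ}
    (ht : 0 < t) : 0 < reweightedStep lam ε z t :=
  sub_pos.2 (div_add_lt_of_div_le hε hlam hz ht)

theorem IterRW.succ_eq_reweightedStep {x : ℕ → ℝ} (hiter : IterRW lam ε z x) (hε : 0 < ε)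
    (hlam : 0 < lam) (hz : lam / ε ≤ z) {k : ℕ} (hk : 0 < x k) :
    x (k + 1) = reweightedStep lam ε z (x k) := by
  have hz0 : 0 < z := (div_pos hlam hε).trans_le hz
  rw [hiter k, abs_of_pos hk, abs_of_pos hz0, if_neg (div_add_lt_of_div_le hε hlam hz hk).not_ge,
    Real.sign_of_pos hz0, one_mul, reweightedStep]

theorem IterRW.pos {x : ℕ → ℝ} (hiter : IterRW lam ε z x) (hε : 0 < ε) (hlam : 0 < lam)
    (hz : lam / ε ≤ z) (hx0 : 0 < x 0) : ∀ k, 0 < x k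
  | 0 => hx0
  | k + 1 => by
    have hk := hiter.pos hε hlam hz hx0 k
    rw [hiter.succ_eq_reweightedStep hε hlam hz hk]
    exact reweightedStep_pos hε hlam hz hk

end ReweightedStep

/-- for `z ≥ λ/ε` and positive start, the iterates stay positive and
converge to `r₂(z)`. -/
theorem iterRW_conv_large_z (ε lam z : ℝ) (hε : 0 < ε) (hlam : 0 < lam)
    (hz : lam / ε ≤ z)
    (x : ℕ → ℝ) (hx0 : 0 < x 0) (hiter : IterRW lam ε z x) :
    (∀ k : ℕ, 0 < x k) ∧
    Filter.Tendsto x Filter.atTop (nhds (r2 lam ε z)) := by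
  have hzε : lam ≤ z * ε := (div_le_iff₀ hε).1 hz
  have hD : lam ≤ (z + ε) ^ 2 / 4 := by nlinarith [sq_nonneg (z - ε)]
  have hr1 := r1_nonpos hzε
  have hr2 := r2_nonneg hzε
  have hpos := hiter.pos hε hlam hz hx0
  have hstep k := hiter.succ_eq_reweightedStep hε hlam hz (hpos k)
  refine ⟨hpos, ?_⟩
  obtain ⟨L, hL, hx⟩ := exists_tendsto_mem_uIcc_of_succ_mem_uIcc fun k =>
    hstep k ▸ reweightedStep_mem_uIcc hlam.le hD (by linarith [hpos k]) (hr1.trans (hpos k).le)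
      (by linarith)
  have hL0 : 0 < L ∨ r2 lam ε z ≤ L := (mem_uIcc.1 hL).imp (fun h => hx0.trans_le h.1) (·.1)
  have hεL : 0 < ε + L := by rcases hL0 with h | h <;> linarith
  have hfix := isFixedPt_of_tendsto_of_succ_eq hstep hx (continuousAt_reweightedStep hεL.ne')
  rwa [← eq_r2_of_reweightedStep_eq hD hεL.ne' hfix (hL0.imp_left hr1.trans_lt)]
end
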